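/- arXiv:math/9806106 — 4 statements merged into one kernel-verified Lean document; each statement's English description precedes it below -/
import Mathlib

section
/- The space D of finitely supported functions, with metric given by the segregation formula d_D(f1,f2)=(ρ1−s)+(ρ2−s), is a real tree. -/
/-!
View `D` as a rooted tree in which the ancestors of `a` are its truncations `a.trunc r`, the
restrictions to `[0, r)`. Then `segD a b` is the length of the longest common ancestor of `a` and
`b`, and `dD a b = a.ρ + b.ρ - 2 * segD a b` is the tree distance. The geodesic from `a` to `b` runs
down the ancestors of `a` to that common ancestor and back up the ancestors of `b`. It is the only
one, because the inequality `min (segD a p) (segD p b) ≤ segD a b` forces every `p` with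
`dD a p + dD p b = dD a b` to be an ancestor of `a` or of `b` of length at least `segD a b`.
If the segments `[a, b]` and `[b, c]` meet only in `b`, then `b` is an ancestor of `a` or of `c`,
and the two segments fit together into `[a, c]`.
-/

open Set Filter

noncomputable section

/-- The space `D`: real functions on `[0, ρ)` with `f 0 = 0`, vanishing except
at finitely many points (the function is recorded on all of `ℝ`, vanishing
outside `[0, ρ)`). -/
structure Dp where
  ρ : ℝ
  toFun : ℝ → ℝ
  ρ_nonneg : 0 ≤ ρ
  zero_at_zero : toFun 0 = 0
  supp_subset : ∀ t, t ∉ Set.Ico 0 ρ → toFun t = 0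
  finite_supp : {t | toFun t ≠ 0}.Finite

/-- The moment of segregation of two elements of `D`. -/
noncomputable def segD (f1 f2 : Dp) : ℝ :=
  sSup {t | t ≤ min f1.ρ f2.ρ ∧ ∀ t' ∈ Set.Ico (0:ℝ) t, f1.toFun t' = f2.toFun t'}

/-- The metric on `D`: `d_D(f1, f2) = (ρ1 - s) + (ρ2 - s)`. -/
noncomputable def dD (f1 f2 : Dp) : ℝ := (f1.ρ - segD f1 f2) + (f2.ρ - segD f1 f2)

/-- A geodesic segment in `D` from `a` to `b`. -/
def IsGeodesicD (g : ℝ → Dp) (a b : Dp) : Prop :=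
  g 0 = a ∧ g (dD a b) = b ∧
  ∀ x ∈ Set.Icc 0 (dD a b), ∀ y ∈ Set.Icc 0 (dD a b), dD (g x) (g y) = |x - y|

@[ext]
theorem Dp.ext {a b : Dp} (hρ : a.ρ = b.ρ) (hf : a.toFun = b.toFun) : a = b := by
  cases a; cases b; simp_all

section Segregation

variable {a b : Dp}

theorem segD_le_min (a b : Dp) : segD a b ≤ min a.ρ b.ρ :=
  csSup_le ⟨0, le_min a.ρ_nonneg b.ρ_nonneg, by simp⟩ fun _ ht => ht.1

theorem segD_le_left (a b : Dp) : segD a b ≤ a.ρ := (segD_le_min a b).trans (min_le_left _ _)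

theorem segD_le_right (a b : Dp) : segD a b ≤ b.ρ := (segD_le_min a b).trans (min_le_right _ _)

theorem le_segD {t : ℝ} (ht : t ≤ min a.ρ b.ρ)
    (hab : ∀ t' ∈ Ico (0 : ℝ) t, a.toFun t' = b.toFun t') : t ≤ segD a b :=
  le_csSup ⟨min a.ρ b.ρ, fun _ ht => ht.1⟩ (by exact ⟨ht, hab⟩)

theorem segD_nonneg (a b : Dp) : 0 ≤ segD a b :=
  le_segD (le_min a.ρ_nonneg b.ρ_nonneg) (by simp)

theorem segD_eqOn (a b : Dp) : ∀ t ∈ Ico (0 : ℝ) (segD a b), a.toFun t = b.toFun t := by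
  rintro t ⟨ht0, hts⟩
  obtain ⟨t', ht', htt'⟩ :=
    exists_lt_of_lt_csSup (by exact ⟨0, le_min a.ρ_nonneg b.ρ_nonneg, by simp⟩) hts
  exact ht'.2 t ⟨ht0, htt'⟩

theorem segD_comm (a b : Dp) : segD a b = segD b a := by
  have key : ∀ a b : Dp, segD a b ≤ segD b a := fun a b =>
    le_segD (min_comm a.ρ b.ρ ▸ segD_le_min a b) fun t ht => (segD_eqOn a b t ht).symm
  exact le_antisymm (key a b) (key b a)

theorem segD_self (a : Dp) : segD a a = a.ρ :=
  le_antisymm (segD_le_left a a) (le_segD (by simp) fun _ _ => rfl)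

theorem min_segD_le_segD (a b c : Dp) : min (segD a b) (segD b c) ≤ segD a c :=
  le_segD (le_min ((min_le_left _ _).trans (segD_le_left a b))
      ((min_le_right _ _).trans (segD_le_right b c)))
    fun t ht => (segD_eqOn a b t ⟨ht.1, ht.2.trans_le (min_le_left _ _)⟩).trans
      (segD_eqOn b c t ⟨ht.1, ht.2.trans_le (min_le_right _ _)⟩)

theorem dD_eq (a b : Dp) : dD a b = a.ρ + b.ρ - 2 * segD a b := by
  unfold dD; ring

theorem dD_comm (a b : Dp) : dD a b = dD b a := by
  rw [dD_eq, dD_eq, segD_comm]; ring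

theorem dD_nonneg (a b : Dp) : 0 ≤ dD a b := by
  rw [dD_eq]; linarith [segD_le_left a b, segD_le_right a b]

end Segregation

namespace Dp

def trunc (a : Dp) (r : ℝ) : Dp where
  ρ := max r 0
  toFun t := if t < r then a.toFun t else 0
  ρ_nonneg := le_max_right _ _
  zero_at_zero := by split <;> simp [a.zero_at_zero]
  supp_subset t ht := by
    split_ifs with htr
    · exact a.supp_subset t fun h => ht ⟨h.1, htr.trans_le (le_max_left _ _)⟩
    · rfl
  finite_supp := a.finite_supp.subset fun t ht => by
    by_cases htr : t < r <;> simp_all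

variable {a b : Dp} {r r' : ℝ}

theorem trunc_ρ (a : Dp) (hr : 0 ≤ r) : (a.trunc r).ρ = r := max_eq_left hr

@[simp]
theorem trunc_toFun (a : Dp) (r t : ℝ) :
    (a.trunc r).toFun t = if t < r then a.toFun t else 0 := rfl

theorem trunc_ρ_self (a : Dp) : a.trunc a.ρ = a := by
  ext t
  · exact max_eq_left a.ρ_nonneg
  · by_cases ht : t < a.ρ
    · simp [ht]
    · simp [ht, a.supp_subset t fun h => ht h.2]

theorem trunc_congr (h : r ≤ segD a b) : a.trunc r = b.trunc r := by
  ext t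
  · rfl
  · by_cases ht : t < r
    · by_cases ht0 : 0 ≤ t
      · simpa [ht] using segD_eqOn a b t ⟨ht0, ht.trans_le h⟩
      · simp [a.supp_subset t fun h => ht0 h.1, b.supp_subset t fun h => ht0 h.1]
    · simp [ht]

theorem eq_trunc_of_segD_eq (h : segD a b = b.ρ) : b = a.trunc b.ρ := by
  conv_lhs => rw [← b.trunc_ρ_self]
  exact trunc_congr (segD_comm a b ▸ h).ge

theorem segD_trunc_left (hr : 0 ≤ r) (hra : r ≤ a.ρ) :
    segD (a.trunc r) b = min r (segD a b) := by
  have hρ := a.trunc_ρ hr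
  apply le_antisymm
  · have hle := segD_le_min (a.trunc r) b
    rw [hρ] at hle
    refine le_min (hle.trans (min_le_left _ _)) (le_segD ?_ fun t ht => ?_)
    · exact hle.trans (min_le_min_right _ hra)
    · have htr : t < r := ht.2.trans_le (hle.trans (min_le_left _ _))
      simpa [htr] using segD_eqOn (a.trunc r) b t ht
  · refine le_segD ?_ fun t ht => ?_
    · rw [hρ]
      exact min_le_min_left _ (segD_le_right a b)
    · have htr : t < r := ht.2.trans_le (min_le_left _ _)
      simpa [htr] using segD_eqOn a b t ⟨ht.1, ht.2.trans_le (min_le_right _ _)⟩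

theorem segD_trunc_trunc (hr : 0 ≤ r) (hra : r ≤ a.ρ) (hr' : 0 ≤ r') (hrb : r' ≤ b.ρ) :
    segD (a.trunc r) (b.trunc r') = min r (min r' (segD a b)) := by
  rw [segD_trunc_left hr hra, segD_comm, segD_trunc_left hr' hrb, segD_comm]

theorem dD_trunc_trunc_self (hr : 0 ≤ r) (hra : r ≤ a.ρ) (hr' : 0 ≤ r') (hr'a : r' ≤ a.ρ) :
    dD (a.trunc r) (a.trunc r') = |r - r'| := by
  rw [dD_eq, segD_trunc_trunc hr hra hr' hr'a, segD_self, min_eq_left hr'a, trunc_ρ a hr,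
    trunc_ρ a hr', ← max_sub_min_eq_abs']
  linarith [min_add_max r r']

theorem dD_trunc_trunc_of_segD_le (hr : segD a b ≤ r) (hra : r ≤ a.ρ) (hr' : segD a b ≤ r')
    (hrb : r' ≤ b.ρ) : dD (a.trunc r) (b.trunc r') = r + r' - 2 * segD a b := by
  have hs := segD_nonneg a b
  rw [dD_eq, segD_trunc_trunc (hs.trans hr) hra (hs.trans hr') hrb, min_eq_right hr',
    min_eq_right hr, trunc_ρ a (hs.trans hr), trunc_ρ b (hs.trans hr')]

/-- The geodesic from `a` to `b`: down the ancestors of `a` to their common ancestor of length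
`segD a b`, then up the ancestors of `b`. -/
def geodesic (a b : Dp) (x : ℝ) : Dp :=
  if x ≤ a.ρ - segD a b then a.trunc (a.ρ - x) else b.trunc (x - a.ρ + 2 * segD a b)

variable {x y : ℝ}

theorem geodesic_of_le (h : x ≤ a.ρ - segD a b) : geodesic a b x = a.trunc (a.ρ - x) :=
  if_pos h

theorem geodesic_of_ge (h : a.ρ - segD a b ≤ x) :
    geodesic a b x = b.trunc (x - a.ρ + 2 * segD a b) := by
  rcases h.lt_or_eq with h | rfl
  · exact if_neg (not_le.mpr h)
  · rw [geodesic_of_le le_rfl, sub_sub_cancel,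
      show a.ρ - segD a b - a.ρ + 2 * segD a b = segD a b by ring]
    exact trunc_congr le_rfl

theorem geodesic_zero (a b : Dp) : geodesic a b 0 = a := by
  rw [geodesic_of_le (by linarith [segD_le_left a b]), sub_zero, trunc_ρ_self]

theorem geodesic_dD (a b : Dp) : geodesic a b (dD a b) = b := by
  rw [geodesic_of_ge (by rw [dD_eq]; linarith [segD_le_right a b]), dD_eq,
    show a.ρ + b.ρ - 2 * segD a b - a.ρ + 2 * segD a b = b.ρ by ring, trunc_ρ_self]

theorem dD_geodesic (hx : x ∈ Icc 0 (dD a b)) (hy : y ∈ Icc 0 (dD a b)) :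
    dD (geodesic a b x) (geodesic a b y) = |x - y| := by
  wlog hxy : x ≤ y generalizing x y
  · rw [dD_comm, abs_sub_comm]
    exact this hy hx (le_of_not_ge hxy)
  rw [dD_eq] at hx hy
  obtain ⟨hx0, -⟩ := hx
  obtain ⟨-, hyd⟩ := hy
  have hs := segD_nonneg a b
  have hsa := segD_le_left a b
  have hsb := segD_le_right a b
  rcases le_total y (a.ρ - segD a b) with hym | hmy
  · rw [geodesic_of_le (hxy.trans hym), geodesic_of_le hym,
      dD_trunc_trunc_self (by linarith) (by linarith) (by linarith) (by linarith),
      sub_sub_sub_cancel_left, abs_sub_comm]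
  rcases le_total x (a.ρ - segD a b) with hxm | hmx
  · rw [geodesic_of_le hxm, geodesic_of_ge hmy,
      dD_trunc_trunc_of_segD_le (by linarith) (by linarith) (by linarith) (by linarith),
      abs_of_nonpos (by linarith)]
    ring
  · rw [geodesic_of_ge hmx, geodesic_of_ge hmy,
      dD_trunc_trunc_self (by linarith) (by linarith) (by linarith) (by linarith),
      add_sub_add_right_eq_sub, sub_sub_sub_cancel_right]

theorem isGeodesicD_geodesic (a b : Dp) : IsGeodesicD (geodesic a b) a b :=
  ⟨geodesic_zero a b, geodesic_dD a b, fun _ hx _ hy => dD_geodesic hx hy⟩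

def geodesicSegment (a b : Dp) : Set Dp :=
  a.trunc '' Icc (segD a b) a.ρ ∪ b.trunc '' Icc (segD a b) b.ρ

theorem geodesicSegment_comm (a b : Dp) : geodesicSegment a b = geodesicSegment b a := by
  rw [geodesicSegment, geodesicSegment, segD_comm, union_comm]

theorem image_geodesic (a b : Dp) : geodesic a b '' Icc 0 (dD a b) = geodesicSegment a b := by
  have hs := segD_nonneg a b
  have hsa := segD_le_left a b
  have hsb := segD_le_right a b
  rw [dD_eq]
  ext p
  constructor
  · rintro ⟨x, ⟨hx0, hxd⟩, rfl⟩
    rcases le_total x (a.ρ - segD a b) with hx | hx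
    · exact Or.inl ⟨a.ρ - x, ⟨by linarith, by linarith⟩, (geodesic_of_le hx).symm⟩
    · exact Or.inr ⟨x - a.ρ + 2 * segD a b, ⟨by linarith, by linarith⟩, (geodesic_of_ge hx).symm⟩
  · rintro (⟨r, ⟨hr, hra⟩, rfl⟩ | ⟨r, ⟨hr, hrb⟩, rfl⟩)
    · refine ⟨a.ρ - r, ⟨by linarith, by linarith⟩, ?_⟩
      rw [geodesic_of_le (by linarith), sub_sub_cancel]
    · refine ⟨r + a.ρ - 2 * segD a b, ⟨by linarith, by linarith⟩, ?_⟩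
      rw [geodesic_of_ge (by linarith)]
      congr 1; ring

variable {c p : Dp}

theorem mem_geodesicSegment_of_dD_add_dD (h : dD a p + dD p b = dD a b) :
    p ∈ geodesicSegment a b := by
  wlog hle : segD a p ≤ segD p b generalizing a b
  · rw [geodesicSegment_comm]
    refine this (by rw [dD_comm b p, dD_comm p a, dD_comm b a]; linarith) ?_
    rw [segD_comm, segD_comm p a]
    exact le_of_not_ge hle
  -- `h` now says `segD a p + segD p b = p.ρ + segD a b`
  rw [dD_eq, dD_eq, dD_eq] at h
  have hmin := min_segD_le_segD a p b
  rw [min_eq_left hle] at hmin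
  have hap := segD_le_right a p
  have hpb : segD p b = p.ρ := le_antisymm (segD_le_left p b) (by linarith)
  refine Or.inr ⟨p.ρ, ⟨by linarith, hpb ▸ segD_le_right p b⟩, ?_⟩
  exact (eq_trunc_of_segD_eq (segD_comm p b ▸ hpb)).symm

theorem geodesicSegment_union_of_segD_eq (hb : segD a b = b.ρ)
    (hinter : geodesicSegment a b ∩ geodesicSegment b c = {b}) :
    geodesicSegment a c = geodesicSegment a b ∪ geodesicSegment b c := by
  have hba : b.ρ ≤ a.ρ := hb ▸ segD_le_left a b
  have hbc : segD b c = min b.ρ (segD a c) := by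
    conv_lhs => rw [eq_trunc_of_segD_eq hb]
    exact segD_trunc_left b.ρ_nonneg hba
  -- otherwise the common ancestor of `a` and `c` would be a second point of the intersection
  have hac : segD a c ≤ b.ρ := by
    by_contra! hlt
    have hmem : a.trunc (segD a c) ∈ geodesicSegment a b ∩ geodesicSegment b c := by
      refine ⟨Or.inl ⟨_, ⟨hb ▸ hlt.le, segD_le_left a c⟩, rfl⟩,
        Or.inr ⟨_, ⟨?_, segD_le_right a c⟩, (trunc_congr le_rfl).symm⟩⟩
      rw [hbc, min_eq_left hlt.le]
      exact hlt.le
    rw [hinter, mem_singleton_iff] at hmem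
    exact hlt.ne' (a.trunc_ρ (segD_nonneg a c) ▸ congrArg Dp.ρ hmem)
  have hba_trunc : ∀ u, b.trunc '' Icc u b.ρ = a.trunc '' Icc u b.ρ := fun u =>
    image_congr fun r hr => trunc_congr (segD_comm a b ▸ hb ▸ hr.2)
  rw [geodesicSegment, geodesicSegment, geodesicSegment, hb, hbc, min_eq_right hac,
    hba_trunc, hba_trunc, ← union_assoc, ← image_union, ← image_union,
    union_eq_left.mpr (Icc_subset_Icc le_rfl hba), union_comm (Icc _ _),
    Icc_union_Icc_eq_Icc hac hba]

theorem geodesicSegment_union (hinter : geodesicSegment a b ∩ geodesicSegment b c = {b}) :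
    geodesicSegment a c = geodesicSegment a b ∪ geodesicSegment b c := by
  have hmax : max (segD a b) (segD b c) = b.ρ := by
    have hmem : b.trunc (max (segD a b) (segD b c)) ∈
        geodesicSegment a b ∩ geodesicSegment b c :=
      ⟨Or.inr ⟨_, ⟨le_max_left _ _, max_le (segD_le_right a b) (segD_le_left b c)⟩, rfl⟩,
        Or.inl ⟨_, ⟨le_max_right _ _, max_le (segD_le_right a b) (segD_le_left b c)⟩, rfl⟩⟩
    rw [hinter, mem_singleton_iff] at hmem
    exact b.trunc_ρ ((segD_nonneg a b).trans (le_max_left _ _)) ▸ congrArg Dp.ρ hmem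
  rcases max_choice (segD a b) (segD b c) with h | h
  · exact geodesicSegment_union_of_segD_eq (h ▸ hmax) hinter
  · rw [geodesicSegment_comm a c, geodesicSegment_comm a b, geodesicSegment_comm b c,
      union_comm]
    refine geodesicSegment_union_of_segD_eq (by rw [segD_comm, ← h, hmax]) ?_
    rw [inter_comm, geodesicSegment_comm, geodesicSegment_comm c b]
    exact hinter

end Dp

variable {a b : Dp} {g : ℝ → Dp}

theorem IsGeodesicD.eqOn_geodesic (hg : IsGeodesicD g a b) :
    EqOn (Dp.geodesic a b) g (Icc 0 (dD a b)) := by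
  obtain ⟨hg0, hgd, hdist⟩ := hg
  intro x hx
  have h0 : (0 : ℝ) ∈ Icc 0 (dD a b) := ⟨le_rfl, dD_nonneg a b⟩
  have hd : dD a b ∈ Icc 0 (dD a b) := ⟨dD_nonneg a b, le_rfl⟩
  have hax : dD a (g x) = x := by
    rw [← hg0, hdist 0 h0 x hx, zero_sub, abs_neg, abs_of_nonneg hx.1]
  have hxb : dD (g x) b = dD a b - x := by
    rw [← abs_of_nonneg (sub_nonneg.mpr hx.2), abs_sub_comm, ← hdist x hx _ hd, hgd]
  have hmem : g x ∈ Dp.geodesic a b '' Icc 0 (dD a b) := by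
    rw [Dp.image_geodesic]
    exact Dp.mem_geodesicSegment_of_dD_add_dD (by rw [hax, hxb]; ring)
  obtain ⟨y, hy, hyx⟩ := hmem
  have hxy := Dp.dD_geodesic h0 hy
  rw [Dp.geodesic_zero, hyx, hax, zero_sub, abs_neg, abs_of_nonneg hy.1] at hxy
  rw [← hyx, hxy]

theorem IsGeodesicD.image_eq (hg : IsGeodesicD g a b) :
    g '' Icc 0 (dD a b) = Dp.geodesicSegment a b :=
  hg.eqOn_geodesic.image_eq.symm.trans (Dp.image_geodesic a b)

/-- `D`, with the segregation metric, is a real tree. -/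
theorem Dp_is_real_tree :
    (∀ a b : Dp, ∃ g : ℝ → Dp, IsGeodesicD g a b ∧
      ∀ g' : ℝ → Dp, IsGeodesicD g' a b → Set.EqOn g g' (Set.Icc 0 (dD a b))) ∧
    (∀ a b c : Dp, ∀ g1 g2 : ℝ → Dp, IsGeodesicD g1 a b → IsGeodesicD g2 b c →
      (g1 '' Set.Icc 0 (dD a b)) ∩ (g2 '' Set.Icc 0 (dD b c)) = {b} →
      ∃ h : ℝ → Dp, IsGeodesicD h a c ∧
        h '' Set.Icc 0 (dD a c) =
          (g1 '' Set.Icc 0 (dD a b)) ∪ (g2 '' Set.Icc 0 (dD b c))) := by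
  refine ⟨fun a b => ⟨Dp.geodesic a b, Dp.isGeodesicD_geodesic a b,
    fun _ hg' => hg'.eqOn_geodesic⟩, ?_⟩
  intro a b c g1 g2 hg1 hg2 hinter
  rw [hg1.image_eq, hg2.image_eq] at hinter ⊢
  refine ⟨Dp.geodesic a c, Dp.isGeodesicD_geodesic a c, ?_⟩
  rw [Dp.image_geodesic, Dp.geodesicSegment_union hinter]
end
end

section
/- The space S is an asymptotic subcone of the hyperbolic plane: every finite set of continuous functions f1,...,fn ∈ S can be isometrically embedded at infinity into the hyperbolic plane. -/
open Set Filter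

noncomputable section

/-- The space `S`: continuous real functions on `[0, ρ]` with `f 0 = 0`.
The function is recorded as a map on all of `ℝ` which is constant in the
clamped variable, so that elements are determined by their values on `[0, ρ]`. -/
structure Sp where
  ρ : ℝ
  toFun : ℝ → ℝ
  ρ_nonneg : 0 ≤ ρ
  contOn : ContinuousOn toFun (Set.Icc 0 ρ)
  zero_at_zero : toFun 0 = 0
  eq_clamp : ∀ t, toFun t = toFun (max 0 (min t ρ))

/-- The moment of segregation of two elements of `S`. -/
noncomputable def seg (f1 f2 : Sp) : ℝ :=
  sSup {t | t ≤ min f1.ρ f2.ρ ∧ ∀ t' ∈ Set.Ico (0:ℝ) t, f1.toFun t' = f2.toFun t'}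

/-- The metric on `S`: `d_S(f1, f2) = (ρ1 - s) + (ρ2 - s)`. -/
noncomputable def dS (f1 f2 : Sp) : ℝ := (f1.ρ - seg f1 f2) + (f2.ρ - seg f1 f2)

/-!
Elements of `S` form an ℝ-tree rooted at the zero function: `trunc f r`, the restriction of `f`
to `[0, r]`, lies on the segment from `f` to the root, and the geodesic from `a` to `b` descends
from `a` to the branch point `trunc a (seg a b)` and then climbs to `b`.

At scale `e`, the function `f k` of a finite family is sent to the point of the upper half-plane
of height `exp (-ρₖ / e)` and real part `∑ᵥ rᵥ(k) exp (-v / e)`, the sum running over the finitely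
many segregation moments `v` of the family, where the digit `rᵥ(k)` labels the cluster of `k` at
level `v` (the indices `l` with `v < seg (f k) (f l)`). The digits of `k ≠ l` first differ at
level `s = seg (f k) (f l)`, so the real parts differ by `≍ exp (-s / e)`, and then
`cosh d = 1 + |z - w|² / (2 Im z Im w) ≍ exp ((ρₖ + ρₗ - 2 s) / e)`; hence `e · d → d_S`.
-/

open Real Topology UpperHalfPlane

theorem Sp.ext {f g : Sp} (hρ : f.ρ = g.ρ) (h : f.toFun = g.toFun) : f = g := by
  cases f; cases g; simp_all

section Segregation

variable {f g : Sp}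

def segSet (f g : Sp) : Set ℝ := {t | t ≤ min f.ρ g.ρ ∧ EqOn f.toFun g.toFun (Ico 0 t)}

theorem zero_mem_segSet (f g : Sp) : 0 ∈ segSet f g :=
  ⟨le_min f.ρ_nonneg g.ρ_nonneg, by simp⟩

theorem bddAbove_segSet (f g : Sp) : BddAbove (segSet f g) := ⟨min f.ρ g.ρ, fun _ ht => ht.1⟩

theorem le_seg {t : ℝ} (ht : t ≤ min f.ρ g.ρ) (hfg : EqOn f.toFun g.toFun (Ico 0 t)) :
    t ≤ seg f g :=
  le_csSup (bddAbove_segSet f g) ⟨ht, hfg⟩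

theorem seg_le {c : ℝ} (hc : ∀ t ≤ min f.ρ g.ρ, EqOn f.toFun g.toFun (Ico 0 t) → t ≤ c) :
    seg f g ≤ c :=
  csSup_le ⟨0, zero_mem_segSet f g⟩ fun t ht => hc t ht.1 ht.2

theorem seg_nonneg (f g : Sp) : 0 ≤ seg f g := le_seg (zero_mem_segSet f g).1 (by simp)

theorem seg_le_min (f g : Sp) : seg f g ≤ min f.ρ g.ρ := seg_le fun _ ht _ => ht

theorem seg_le_left (f g : Sp) : seg f g ≤ f.ρ := (seg_le_min f g).trans (min_le_left _ _)

theorem seg_le_right (f g : Sp) : seg f g ≤ g.ρ := (seg_le_min f g).trans (min_le_right _ _)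

theorem eqOn_Ico_seg (f g : Sp) : EqOn f.toFun g.toFun (Ico 0 (seg f g)) := fun t ht => by
  obtain ⟨u, hu, htu⟩ := exists_lt_of_lt_csSup ⟨0, zero_mem_segSet f g⟩ ht.2
  exact hu.2 ⟨ht.1, htu⟩

theorem seg_comm (f g : Sp) : seg f g = seg g f :=
  le_antisymm (le_seg ((seg_le_min f g).trans_eq (min_comm _ _)) (eqOn_Ico_seg f g).symm)
    (le_seg ((seg_le_min g f).trans_eq (min_comm _ _)) (eqOn_Ico_seg g f).symm)

theorem eqOn_Icc_seg (f g : Sp) : EqOn f.toFun g.toFun (Icc 0 (seg f g)) := by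
  rcases (seg_nonneg f g).eq_or_lt with h0 | h0
  · rw [← h0, Icc_self, eqOn_singleton, f.zero_at_zero, g.zero_at_zero]
  · exact (eqOn_Ico_seg f g).of_subset_closure
      (f.contOn.mono (Icc_subset_Icc_right (seg_le_left f g)))
      (g.contOn.mono (Icc_subset_Icc_right (seg_le_right f g)))
      Ico_subset_Icc_self (closure_Ico h0.ne).ge

theorem seg_self (f : Sp) : seg f f = f.ρ :=
  le_antisymm (seg_le_left f f) (le_seg (by simp) (eqOn_refl _ _))

theorem min_seg_le_seg (f g h : Sp) : min (seg f g) (seg g h) ≤ seg f h :=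
  le_seg (le_min ((min_le_left _ _).trans (seg_le_left f g))
      ((min_le_right _ _).trans (seg_le_right g h)))
    (((eqOn_Ico_seg f g).mono (Ico_subset_Ico_right (min_le_left _ _))).trans
      ((eqOn_Ico_seg g h).mono (Ico_subset_Ico_right (min_le_right _ _))))

theorem dS_self (f : Sp) : dS f f = 0 := by simp [dS, seg_self]

end Segregation

section Truncation

variable {f g : Sp}

theorem max_zero_min_mem_Icc (t : ℝ) {c : ℝ} (hc : 0 ≤ c) : max 0 (min t c) ∈ Icc 0 c :=
  ⟨le_max_left _ _, max_le hc (min_le_right _ _)⟩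

theorem max_zero_min_of_mem_Icc {t c : ℝ} (ht : t ∈ Icc 0 c) : max 0 (min t c) = t := by
  rw [min_eq_left ht.2, max_eq_right ht.1]

-- `r` is clamped into `[0, f.ρ]` so that `trunc` is total.
def trunc (f : Sp) (r : ℝ) : Sp where
  ρ := max 0 (min r f.ρ)
  toFun t := f.toFun (max 0 (min t (max 0 (min r f.ρ))))
  ρ_nonneg := le_max_left _ _
  contOn := f.contOn.comp (by fun_prop) fun t _ =>
    Icc_subset_Icc_right (max_le f.ρ_nonneg (min_le_right _ _))
      (max_zero_min_mem_Icc t (le_max_left _ _))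
  zero_at_zero := by
    rw [max_zero_min_of_mem_Icc ⟨le_rfl, le_max_left _ _⟩, f.zero_at_zero]
  eq_clamp t := by
    rw [max_zero_min_of_mem_Icc (max_zero_min_mem_Icc t (le_max_left _ _))]

theorem trunc_ρ {r : ℝ} (hr : r ∈ Icc 0 f.ρ) : (trunc f r).ρ = r :=
  max_zero_min_of_mem_Icc hr

theorem trunc_toFun {r t : ℝ} (hr : r ≤ f.ρ) (ht : t ∈ Icc 0 r) :
    (trunc f r).toFun t = f.toFun t := by
  simp only [trunc, max_zero_min_of_mem_Icc ⟨ht.1.trans ht.2, hr⟩, max_zero_min_of_mem_Icc ht]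

theorem trunc_self (f : Sp) : trunc f f.ρ = f :=
  Sp.ext (trunc_ρ ⟨f.ρ_nonneg, le_rfl⟩) <| funext fun t => by
    simp only [trunc, min_self, max_eq_right f.ρ_nonneg, ← f.eq_clamp]

theorem trunc_seg_left (f g : Sp) : trunc f (seg f g) = trunc g (seg f g) := by
  have hf : seg f g ∈ Icc 0 f.ρ := ⟨seg_nonneg f g, seg_le_left f g⟩
  have hg : seg f g ∈ Icc 0 g.ρ := ⟨seg_nonneg f g, seg_le_right f g⟩
  refine Sp.ext ((trunc_ρ hf).trans (trunc_ρ hg).symm) (funext fun t => ?_)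
  simp only [trunc, max_zero_min_of_mem_Icc hf, max_zero_min_of_mem_Icc hg]
  exact eqOn_Icc_seg f g (max_zero_min_mem_Icc t (seg_nonneg f g))

theorem seg_trunc_trunc {r r' : ℝ} (hr : r ∈ Icc 0 f.ρ) (hr' : r' ∈ Icc 0 g.ρ) :
    seg (trunc f r) (trunc g r') = min (min r r') (seg f g) := by
  have htrunc {t m : ℝ} (ht : t ∈ Ico 0 m) (hm : m ≤ min r r') :
      (trunc f r).toFun t = f.toFun t ∧ (trunc g r').toFun t = g.toFun t :=
    ⟨trunc_toFun hr.2 ⟨ht.1, (ht.2.trans_le (hm.trans (min_le_left _ _))).le⟩,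
      trunc_toFun hr'.2 ⟨ht.1, (ht.2.trans_le (hm.trans (min_le_right _ _))).le⟩⟩
  refine le_antisymm (seg_le fun t ht hfg => ?_) (le_seg ?_ fun t ht => ?_)
  · rw [trunc_ρ hr, trunc_ρ hr'] at ht
    refine le_min ht (le_seg (ht.trans (min_le_min hr.2 hr'.2)) fun t' ht' => ?_)
    rw [← (htrunc ht' ht).1, ← (htrunc ht' ht).2, hfg ht']
  · rw [trunc_ρ hr, trunc_ρ hr']
    exact min_le_left _ _
  · rw [(htrunc ht (min_le_left _ _)).1, (htrunc ht (min_le_left _ _)).2]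
    exact eqOn_Ico_seg f g ⟨ht.1, ht.2.trans_le (min_le_right _ _)⟩

theorem dS_trunc_trunc {r r' : ℝ} (hr : r ∈ Icc 0 f.ρ) (hr' : r' ∈ Icc 0 g.ρ) :
    dS (trunc f r) (trunc g r') = r + r' - 2 * min (min r r') (seg f g) := by
  rw [dS, seg_trunc_trunc hr hr', trunc_ρ hr, trunc_ρ hr']; ring

end Truncation

section Geodesic

variable {a b : Sp}

-- The point at distance `x` from `a` has height `seg a b + |a.ρ - seg a b - x|` above the root.
def geodesic (a b : Sp) (x : ℝ) : Sp :=
  if x ≤ a.ρ - seg a b then trunc a (a.ρ - x) else trunc b (x - a.ρ + 2 * seg a b)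

theorem geodesic_zero (a b : Sp) : geodesic a b 0 = a := by
  rw [geodesic, if_pos (sub_nonneg.2 (seg_le_left a b)), sub_zero, trunc_self]

theorem geodesic_dS (a b : Sp) : geodesic a b (dS a b) = b := by
  rw [geodesic, dS]
  rcases (seg_le_right a b).eq_or_lt with hb | hb
  · rw [if_pos (by linarith), show a.ρ - (a.ρ - seg a b + (b.ρ - seg a b)) = seg a b by linarith,
      trunc_seg_left, hb, trunc_self]
  · rw [if_neg (by linarith),
      show a.ρ - seg a b + (b.ρ - seg a b) - a.ρ + 2 * seg a b = b.ρ by ring, trunc_self]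

theorem dS_geodesic {x y : ℝ} (hx : x ∈ Icc 0 (dS a b)) (hy : y ∈ Icc 0 (dS a b)) :
    dS (geodesic a b x) (geodesic a b y) = |x - y| := by
  have := seg_le_left a b
  have := seg_le_right a b
  have := seg_nonneg a b
  simp only [dS, mem_Icc] at hx hy
  unfold geodesic
  split_ifs <;>
  · rw [dS_trunc_trunc ⟨by linarith, by linarith⟩ ⟨by linarith, by linarith⟩]
    simp only [seg_self, seg_comm b a, abs_eq_max_neg, min_def, max_def]
    split_ifs <;> linarith

end Geodesic

theorem tendsto_mul_of_cosh_bounds {d : ℝ → ℝ} {D a b : ℝ} (ha : 0 < a) (hd : ∀ e, 0 ≤ d e)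
    (hbounds : ∀ᶠ e in 𝓝[>] (0 : ℝ),
      a * exp (D / e) ≤ cosh (d e) ∧ cosh (d e) ≤ b * exp (D / e)) :
    Tendsto (fun e => e * d e) (𝓝[>] 0) (𝓝 D) := by
  have hε : Tendsto (fun e : ℝ => e) (𝓝[>] 0) (𝓝 0) := nhdsWithin_le_nhds
  have hlow : Tendsto (fun e => D + e * log a) (𝓝[>] 0) (𝓝 D) := by
    simpa using (hε.mul_const (log a)).const_add D
  have hup : Tendsto (fun e => D + e * log (2 * b)) (𝓝[>] 0) (𝓝 D) := by
    simpa using (hε.mul_const (log (2 * b))).const_add D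
  refine tendsto_of_tendsto_of_tendsto_of_le_of_le' hlow hup ?_ ?_ <;>
    filter_upwards [hbounds, self_mem_nhdsWithin] with e ⟨hlo, hhi⟩ (he : 0 < e)
  · have hcosh : cosh (d e) ≤ exp (d e) := by
      rw [cosh_eq]; linarith [exp_le_exp.2 (by linarith [hd e] : -d e ≤ d e)]
    have hlog : log a + D / e ≤ d e := by
      simpa [log_mul ha.ne'] using log_le_log (by positivity) (hlo.trans hcosh)
    calc D + e * log a = e * (log a + D / e) := by field_simp; ring
      _ ≤ e * d e := mul_le_mul_of_nonneg_left hlog he.le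
  · have hexp : exp (d e) ≤ 2 * b * exp (D / e) := by
      rw [cosh_eq] at hhi; linarith [exp_pos (-d e)]
    have hb : 0 < 2 * b := pos_of_mul_pos_left ((exp_pos _).trans_le hexp) (exp_pos _).le
    have hlog : d e ≤ log (2 * b) + D / e := by
      simpa [log_mul hb.ne'] using log_le_log (exp_pos _) hexp
    calc e * d e ≤ e * (log (2 * b) + D / e) := mul_le_mul_of_nonneg_left hlog he.le
      _ = D + e * log (2 * b) := by field_simp; ring

theorem UpperHalfPlane.cosh_dist_eq (z w : ℍ) :
    cosh (dist z w) = 1 + ((z.re - w.re) ^ 2 + (z.im - w.im) ^ 2) / (2 * z.im * w.im) := by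
  rw [cosh_dist, Complex.dist_eq_re_im, sq_sqrt (by positivity)]
  rfl

theorem UpperHalfPlane.cosh_dist_bounds {z w : ℍ} {T α β u c : ℝ} (hT : 0 < T)
    (hα : 0 < α) (hα1 : α ≤ 1) (hβ : 0 < β) (hβ1 : β ≤ 1)
    (hz : z.im = T * α) (hw : w.im = T * β) (hre : z.re - w.re = T * u)
    (hu : c ^ 2 / 2 ≤ u ^ 2 ∧ u ^ 2 ≤ 2 * c ^ 2) :
    c ^ 2 / 4 * (α * β)⁻¹ ≤ cosh (dist z w) ∧
      cosh (dist z w) ≤ (2 * c ^ 2 + 3) / 2 * (α * β)⁻¹ := by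
  have hcosh : cosh (dist z w) = 1 + (u ^ 2 + (α - β) ^ 2) / (2 * (α * β)) := by
    rw [cosh_dist_eq, hz, hw, hre]
    field_simp
  have hαβ : 0 < α * β := mul_pos hα hβ
  have hsq : (α - β) ^ 2 ≤ 1 := by nlinarith
  rw [hcosh]
  constructor
  · calc c ^ 2 / 4 * (α * β)⁻¹ = (c ^ 2 / 2) / (2 * (α * β)) := by field_simp; ring
      _ ≤ (u ^ 2 + (α - β) ^ 2) / (2 * (α * β)) := by gcongr; nlinarith [sq_nonneg (α - β)]
      _ ≤ _ := by linarith
  · have h1 : 1 ≤ (α * β)⁻¹ := one_le_inv₀ hαβ |>.2 (by nlinarith)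
    calc 1 + (u ^ 2 + (α - β) ^ 2) / (2 * (α * β))
        ≤ (α * β)⁻¹ + (2 * c ^ 2 + 1) / (2 * (α * β)) := by gcongr; linarith
      _ = _ := by field_simp; ring

theorem UpperHalfPlane.tendsto_mul_dist {z w : ℝ → ℍ} {ρ₁ ρ₂ s c : ℝ} (hs₁ : s ≤ ρ₁) (hs₂ : s ≤ ρ₂)
    (hz : ∀ e, (z e).im = exp (-ρ₁ / e)) (hw : ∀ e, (w e).im = exp (-ρ₂ / e)) (hc : c ≠ 0)
    (hre : Tendsto (fun e => exp (s / e) * ((z e).re - (w e).re)) (𝓝[>] 0) (𝓝 c)) :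
    Tendsto (fun e => e * dist (z e) (w e)) (𝓝[>] 0) (𝓝 (ρ₁ + ρ₂ - 2 * s)) := by
  refine tendsto_mul_of_cosh_bounds (a := c ^ 2 / 4) (b := (2 * c ^ 2 + 3) / 2) (by positivity)
    (fun _ => dist_nonneg) ?_
  have hc2 : 0 < c ^ 2 := by positivity
  have hu := (hre.pow 2).eventually (Icc_mem_nhds (by linarith : c ^ 2 / 2 < c ^ 2)
    (by linarith : c ^ 2 < 2 * c ^ 2))
  filter_upwards [hu, self_mem_nhdsWithin] with e hu (he : 0 < e)
  have hexp_le_one {ρ : ℝ} (hρ : s ≤ ρ) : exp ((s - ρ) / e) ≤ 1 :=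
    exp_le_one_iff.2 (div_nonpos_of_nonpos_of_nonneg (by linarith) he.le)
  have hsplit (ρ : ℝ) : exp (-ρ / e) = exp (-s / e) * exp ((s - ρ) / e) := by
    rw [← exp_add]; ring_nf
  have hexp : exp ((ρ₁ + ρ₂ - 2 * s) / e) = (exp ((s - ρ₁) / e) * exp ((s - ρ₂) / e))⁻¹ := by
    rw [← exp_add, ← exp_neg]; ring_nf
  rw [hexp]
  refine cosh_dist_bounds (exp_pos _) (exp_pos _) (hexp_le_one hs₁) (exp_pos _)
    (hexp_le_one hs₂) ((hz e).trans (hsplit ρ₁)) ((hw e).trans (hsplit ρ₂)) ?_ hu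
  rw [← mul_assoc, ← exp_add, neg_div, neg_add_cancel, exp_zero, one_mul]

section Embedding

variable {n : ℕ} (f : Fin n → Sp)

def segValues : Finset ℝ := Finset.univ.image fun p : Fin n × Fin n => seg (f p.1) (f p.2)

-- `k` is put in explicitly because `seg (f k) (f k) = (f k).ρ` may be `≤ v`.
def cluster (v : ℝ) (k : Fin n) : Finset (Fin n) :=
  Finset.univ.filter fun l => l = k ∨ v < seg (f k) (f l)

theorem seg_mem_segValues (k l : Fin n) : seg (f k) (f l) ∈ segValues f :=
  Finset.mem_image_of_mem _ (Finset.mem_univ (k, l))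

variable {f} {v : ℝ} {k l m : Fin n}

theorem mem_cluster : l ∈ cluster f v k ↔ l = k ∨ v < seg (f k) (f l) := by simp [cluster]

theorem mem_cluster_comm : l ∈ cluster f v k ↔ k ∈ cluster f v l := by
  simp only [mem_cluster, eq_comm, seg_comm (f k)]

theorem mem_cluster_trans (hl : l ∈ cluster f v k) (hm : m ∈ cluster f v l) :
    m ∈ cluster f v k := by
  rw [mem_cluster] at *
  rcases hl with rfl | hl
  · exact hm
  rcases hm with rfl | hm
  · exact .inr hl
  exact .inr ((lt_min hl hm).trans_le (min_seg_le_seg _ _ _))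

theorem cluster_eq_of_mem (hl : l ∈ cluster f v k) : cluster f v l = cluster f v k := by
  ext m
  exact ⟨mem_cluster_trans hl, mem_cluster_trans (mem_cluster_comm.1 hl)⟩

variable (f v k)

def clusterRep : Fin n := (cluster f v k).min' ⟨k, mem_cluster.2 (.inl rfl)⟩

theorem clusterRep_mem : clusterRep f v k ∈ cluster f v k := Finset.min'_mem _ _

variable {f v k}

theorem clusterRep_eq_of_lt_seg (h : v < seg (f k) (f l)) :
    clusterRep f v l = clusterRep f v k := by
  simp only [clusterRep, cluster_eq_of_mem (mem_cluster.2 (.inr h))]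

theorem clusterRep_seg_ne (hkl : k ≠ l) :
    clusterRep f (seg (f k) (f l)) k ≠ clusterRep f (seg (f k) (f l)) l := fun h => by
  have hmem := mem_cluster_trans (clusterRep_mem f _ k)
    (mem_cluster_comm.1 (h ▸ clusterRep_mem f _ l))
  rcases mem_cluster.1 hmem with rfl | hlt
  · exact hkl rfl
  · exact hlt.false

variable (f)

def coord (k : Fin n) (e : ℝ) : ℝ :=
  ∑ v ∈ segValues f, (clusterRep f v k : ℕ) * exp (-v / e)

theorem tendsto_clusterRep_sub_mul_exp (k l : Fin n) (v : ℝ) :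
    Tendsto (fun e => ((clusterRep f v k : ℕ) - (clusterRep f v l : ℕ) : ℝ) *
        exp ((seg (f k) (f l) - v) / e)) (𝓝[>] 0)
      (𝓝 (if v = seg (f k) (f l) then
        ((clusterRep f v k : ℕ) - (clusterRep f v l : ℕ) : ℝ) else 0)) := by
  rcases lt_trichotomy v (seg (f k) (f l)) with hv | rfl | hv
  · simp only [hv.ne, if_false, clusterRep_eq_of_lt_seg hv, sub_self, zero_mul]
    exact tendsto_const_nhds
  · simp only [sub_self, zero_div, exp_zero, mul_one, if_true]
    exact tendsto_const_nhds
  · have hexp : Tendsto (fun e => exp ((seg (f k) (f l) - v) / e)) (𝓝[>] 0) (𝓝 0) :=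
      tendsto_exp_atBot.comp <|
        (tendsto_inv_nhdsGT_zero.const_mul_atTop_of_neg (sub_neg.2 hv)).congr
          fun e => (div_eq_mul_inv _ _).symm
    simpa [hv.ne'] using hexp.const_mul ((clusterRep f v k : ℕ) - (clusterRep f v l : ℕ) : ℝ)

theorem tendsto_exp_mul_coord_sub (k l : Fin n) :
    Tendsto (fun e => exp (seg (f k) (f l) / e) * (coord f k e - coord f l e)) (𝓝[>] 0)
      (𝓝 ((clusterRep f (seg (f k) (f l)) k : ℕ) - (clusterRep f (seg (f k) (f l)) l : ℕ))) := by
  have hsum := tendsto_finsetSum (segValues f) fun v _ => tendsto_clusterRep_sub_mul_exp f k l v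
  simp only [Finset.sum_ite_eq', if_pos (seg_mem_segValues f k l)] at hsum
  refine hsum.congr fun e => ?_
  simp only [coord, ← Finset.sum_sub_distrib, Finset.mul_sum, ← sub_mul]
  refine Finset.sum_congr rfl fun v _ => ?_
  rw [sub_div, exp_sub, neg_div, exp_neg]
  ring

def embeddingPoint (k : Fin n) (e : ℝ) : ℍ := ⟨⟨coord f k e, exp (-(f k).ρ / e)⟩, exp_pos _⟩

theorem tendsto_mul_dist_embeddingPoint (k l : Fin n) :
    Tendsto (fun e => e * dist (embeddingPoint f k e) (embeddingPoint f l e)) (𝓝[>] 0)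
      (𝓝 (dS (f k) (f l))) := by
  rcases eq_or_ne k l with rfl | hkl
  · simp [dS_self]
  have hdigit : ((clusterRep f (seg (f k) (f l)) k : ℕ) - (clusterRep f (seg (f k) (f l)) l : ℕ)
      : ℝ) ≠ 0 :=
    sub_ne_zero.2 (by exact_mod_cast Fin.val_injective.ne (clusterRep_seg_ne hkl))
  rw [show dS (f k) (f l) = (f k).ρ + (f l).ρ - 2 * seg (f k) (f l) by rw [dS]; ring]
  exact UpperHalfPlane.tendsto_mul_dist (seg_le_left _ _) (seg_le_right _ _) (fun _ => rfl)
    (fun _ => rfl) hdigit (tendsto_exp_mul_coord_sub f k l)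

end Embedding

/-- `S` is an asymptotic subcone of the hyperbolic plane (here
the upper half-plane with its hyperbolic metric): it is geodesic, and every
finite set of functions `f1, …, fn ∈ S` can be isometrically embedded at
infinity into the hyperbolic plane. -/
theorem Sp_asymptotic_subcone :
    (∀ a b : Sp, ∃ g : ℝ → Sp, g 0 = a ∧ g (dS a b) = b ∧
      ∀ x ∈ Set.Icc 0 (dS a b), ∀ y ∈ Set.Icc 0 (dS a b), dS (g x) (g y) = |x - y|) ∧
    (∀ (n : ℕ) (f : Fin n → Sp),
      ∃ ε : ℕ → ℝ, (∀ i, 0 < ε i) ∧ Tendsto ε atTop (nhds 0) ∧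
      ∃ x : Fin n → ℕ → UpperHalfPlane,
        ∀ k1 k2 : Fin n,
          Tendsto (fun i => ε i * dist (x k1 i) (x k2 i)) atTop
            (nhds (dS (f k1) (f k2)))) := by
  refine ⟨fun a b => ⟨geodesic a b, geodesic_zero a b, geodesic_dS a b,
    fun x hx y hy => dS_geodesic hx hy⟩, fun n f => ?_⟩
  have hε : Tendsto (fun i : ℕ => 1 / ((i : ℝ) + 1)) atTop (𝓝[>] 0) :=
    tendsto_nhdsWithin_iff.2 ⟨tendsto_one_div_add_atTop_nhds_zero_nat,
      .of_forall fun i => mem_Ioi.2 (by positivity)⟩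
  exact ⟨fun i => 1 / ((i : ℝ) + 1), fun i => by positivity, tendsto_nhdsWithin_iff.1 hε |>.1,
    fun k i => embeddingPoint f k (1 / ((i : ℝ) + 1)),
    fun k l => (tendsto_mul_dist_embeddingPoint f k l).comp hε⟩
end
end

section
/- The map F: D → S sending a finitely supported function γ with support {a1<...<aN} and domain [0,ρ0) to the continuous piecewise-linear function F[γ](t) = Σ_{i=0}^k γ(a_i)·(t−a_i) for a_k ≤ t ≤ a_{k+1} (with a_0=0, a_{N+1}=ρ0) is an isometric embedding of D into S. -/
open Set Filter

noncomputable section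

/-- Auxiliary: positivity of support points. -/
lemma Dp.supp_pos (γ : Dp) {a : ℝ} (ha : γ.toFun a ≠ 0) : 0 < a := by
  rcases lt_or_ge 0 a with h | h
  · exact h
  · rcases eq_or_lt_of_le h with h' | h'
    · exact absurd (h' ▸ γ.zero_at_zero) ha
    · exact absurd (γ.supp_subset a (by simp [Set.mem_Ico, not_le.mpr h'])) ha

noncomputable def Fmap (γ : Dp) : Sp where
  ρ := γ.ρ
  toFun := fun t => ∑ a ∈ γ.finite_supp.toFinset,
    γ.toFun a * max (max 0 (min t γ.ρ) - a) 0
  ρ_nonneg := γ.ρ_nonneg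
  contOn := by
    apply Continuous.continuousOn
    apply continuous_finset_sum
    intro a _
    exact continuous_const.mul
      (((continuous_const.max (continuous_id.min continuous_const)).sub
        continuous_const).max continuous_const)
  zero_at_zero := by
    apply Finset.sum_eq_zero
    intro a ha
    rw [Set.Finite.mem_toFinset] at ha
    have hpos : 0 < a := Dp.supp_pos γ ha
    have : min (0:ℝ) γ.ρ = 0 := min_eq_left γ.ρ_nonneg
    rw [this, max_self]
    rw [max_eq_right (by linarith), mul_zero]
  eq_clamp := by
    intro t
    have h1 : (0:ℝ) ≤ max 0 (min t γ.ρ) := le_max_left _ _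
    have h2 : max 0 (min t γ.ρ) ≤ γ.ρ := max_le γ.ρ_nonneg (min_le_right _ _)
    simp only [min_eq_left h2, max_eq_right h1]

lemma Fmap_eq_sum (γ : Dp) (s : Finset ℝ) (hs : γ.finite_supp.toFinset ⊆ s) (t : ℝ) :
    (Fmap γ).toFun t = ∑ a ∈ s, γ.toFun a * max (max 0 (min t γ.ρ) - a) 0 := by
  apply Finset.sum_subset hs
  intro a _ ha
  rw [Set.Finite.mem_toFinset] at ha
  simp only [Set.mem_setOf_eq, not_not] at ha
  rw [ha, zero_mul]

lemma clamp_eq {γ : Dp} {t' t : ℝ} (h0 : 0 ≤ t') (h1 : t' < t) (h2 : t ≤ γ.ρ) :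
    max 0 (min t' γ.ρ) = t' := by
  rw [min_eq_left (by linarith), max_eq_right h0]

lemma key (γ1 γ2 : Dp) (t : ℝ) (ht : t ≤ min γ1.ρ γ2.ρ) :
    (∀ t' ∈ Set.Ico (0:ℝ) t, (Fmap γ1).toFun t' = (Fmap γ2).toFun t') ↔
    (∀ t' ∈ Set.Ico (0:ℝ) t, γ1.toFun t' = γ2.toFun t') := by
  set u : Finset ℝ := γ1.finite_supp.toFinset ∪ γ2.finite_supp.toFinset with hu
  have hmem : ∀ a ∈ u, γ1.toFun a ≠ 0 ∨ γ2.toFun a ≠ 0 := by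
    intro a ha
    rw [hu, Finset.mem_union, Set.Finite.mem_toFinset, Set.Finite.mem_toFinset] at ha
    exact ha
  have hpos : ∀ a ∈ u, 0 < a := by
    intro a ha
    rcases hmem a ha with h | h
    · exact Dp.supp_pos γ1 h
    · exact Dp.supp_pos γ2 h
  constructor
  · -- F equal ⟹ γ equal
    intro hF
    by_contra hne
    push_neg at hne
    obtain ⟨t0, ht0, hne0⟩ := hne
    have ht0u : t0 ∈ u := by
      rw [hu, Finset.mem_union, Set.Finite.mem_toFinset, Set.Finite.mem_toFinset]
      by_contra h
      push_neg at h
      simp only [Set.mem_setOf_eq, not_not] at h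
      exact hne0 (h.1.trans h.2.symm)
    -- bad points
    set B := u.filter (fun a => a < t ∧ γ1.toFun a ≠ γ2.toFun a) with hB
    have hBne : B.Nonempty := ⟨t0, by
      rw [hB, Finset.mem_filter]; exact ⟨ht0u, ht0.2, hne0⟩⟩
    set b := B.min' hBne with hb
    have hbB : b ∈ B := B.min'_mem hBne
    rw [hB, Finset.mem_filter] at hbB
    obtain ⟨hbu, hbt, hbne⟩ := hbB
    -- next point
    set C := insert t (u.filter (fun a => b < a)) with hC
    have hCne : C.Nonempty := ⟨t, Finset.mem_insert_self _ _⟩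
    set c := C.min' hCne with hc
    have hbc : b < c := by
      rw [hc, Finset.lt_min'_iff]
      intro a ha
      rw [hC, Finset.mem_insert] at ha
      rcases ha with rfl | ha
      · exact hbt
      · exact (Finset.mem_filter.mp ha).2
    have hct : c ≤ t := Finset.min'_le _ _ (Finset.mem_insert_self _ _)
    set t' := (b + c) / 2 with ht'
    have hbt' : b < t' := by rw [ht']; linarith
    have ht'c : t' < c := by rw [ht']; linarith
    have ht'0 : 0 ≤ t' := le_of_lt ((hpos b hbu).trans hbt')
    have ht't : t' < t := lt_of_lt_of_le ht'c hct
    have hFt' := hF t' ⟨ht'0, ht't⟩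
    rw [Fmap_eq_sum γ1 u Finset.subset_union_left,
        Fmap_eq_sum γ2 u Finset.subset_union_right,
        clamp_eq ht'0 ht't (ht.trans (min_le_left _ _)),
        clamp_eq ht'0 ht't (ht.trans (min_le_right _ _))] at hFt'
    have hsum : ∑ a ∈ u, (γ1.toFun a - γ2.toFun a) * max (t' - a) 0 = 0 := by
      simp only [sub_mul]
      rw [Finset.sum_sub_distrib, hFt', sub_self]
    rw [Finset.sum_eq_single_of_mem b hbu ?side] at hsum
    · rcases mul_eq_zero.mp hsum with h | h
      · exact hbne (sub_eq_zero.mp h)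
      · rw [max_eq_left (by linarith)] at h
        linarith
    case side =>
      intro a hau hab
      rcases eq_or_ne (γ1.toFun a) (γ2.toFun a) with h | h
      · rw [h, sub_self, zero_mul]
      rcases lt_or_ge a t with hat | hat
      · have haB : a ∈ B := by
          rw [hB, Finset.mem_filter]; exact ⟨hau, hat, h⟩
        have hba : b < a := lt_of_le_of_ne (B.min'_le a haB) (Ne.symm hab)
        have haC : a ∈ C := by
          rw [hC, Finset.mem_insert]
          exact Or.inr (Finset.mem_filter.mpr ⟨hau, hba⟩)
        have : c ≤ a := Finset.min'_le _ _ haC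
        rw [max_eq_right (by linarith), mul_zero]
      · rw [max_eq_right (by linarith), mul_zero]
  · -- γ equal ⟹ F equal
    intro hγ t' ht'
    rw [Fmap_eq_sum γ1 u Finset.subset_union_left,
        Fmap_eq_sum γ2 u Finset.subset_union_right]
    have hc1 : max 0 (min t' γ1.ρ) = t' :=
      clamp_eq ht'.1 ht'.2 (ht.trans (min_le_left _ _))
    have hc2 : max 0 (min t' γ2.ρ) = t' :=
      clamp_eq ht'.1 ht'.2 (ht.trans (min_le_right _ _))
    rw [hc1, hc2]
    apply Finset.sum_congr rfl
    intro a ha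
    rcases lt_or_ge a t' with h | h
    · rw [hγ a ⟨(hpos a ha).le, h.trans ht'.2⟩]
    · rw [max_eq_right (by linarith), mul_zero, mul_zero]

/-- the map `F : D → S` sending a finitely supported `γ` with
support `{a1 < … < aN}` to the piecewise-linear function
`F[γ](t) = Σ_{i=0}^k γ(a_i)(t - a_i)` for `a_k ≤ t ≤ a_{k+1}` — equivalently
`F[γ](t) = Σ_{a ∈ supp γ} γ(a) · max (t - a) 0` — is an isometric embedding
of `D` into `S`. -/
theorem D_embeds_into_S :
    ∃ F : Dp → Sp,
      (∀ γ : Dp, (F γ).ρ = γ.ρ ∧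
        ∀ t ∈ Set.Icc (0:ℝ) γ.ρ,
          (F γ).toFun t = ∑ a ∈ γ.finite_supp.toFinset, γ.toFun a * max (t - a) 0) ∧
      (∀ γ1 γ2 : Dp, dS (F γ1) (F γ2) = dD γ1 γ2) := by
  refine ⟨Fmap, fun γ => ⟨rfl, fun t ht => ?_⟩, fun γ1 γ2 => ?_⟩
  · show (∑ a ∈ _, _) = _
    apply Finset.sum_congr rfl
    intro a _
    rw [min_eq_left ht.2, max_eq_right ht.1]
  · have hseg : seg (Fmap γ1) (Fmap γ2) = segD γ1 γ2 := by
      unfold seg segD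
      congr 1
      ext t
      simp only [Set.mem_setOf_eq]
      constructor
      · rintro ⟨h1, h2⟩
        exact ⟨h1, (key γ1 γ2 t h1).mp h2⟩
      · rintro ⟨h1, h2⟩
        exact ⟨h1, (key γ1 γ2 t h1).mpr h2⟩
    unfold dS dD
    rw [hseg]
    rfl
end
end

section
/- There is no isometric embedding of S into D; in particular, S and D are not isometric. -/
open Set Filter

noncomputable section

namespace NoEmb

open Topology

/-! ### Heights -/

def hh (n : ℕ) : ℝ := 1 - (2⁻¹ : ℝ) ^ n

lemma pow_half_pos (n : ℕ) : (0:ℝ) < (2⁻¹:ℝ) ^ n := by positivity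

lemma pow_half_le_one (n : ℕ) : (2⁻¹:ℝ) ^ n ≤ 1 :=
  pow_le_one₀ (by norm_num) (by norm_num)

lemma pow_half_anti : StrictAnti (fun n : ℕ => (2⁻¹:ℝ) ^ n) :=
  pow_right_strictAnti₀ (by norm_num) (by norm_num)

lemma pow_half_lt {m n : ℕ} (h : m < n) : (2⁻¹:ℝ) ^ n < (2⁻¹:ℝ) ^ m :=
  pow_half_anti h

lemma hh_zero : hh 0 = 0 := by simp [hh]

lemma hh_lt_one (n : ℕ) : hh n < 1 := by
  unfold hh; linarith [pow_half_pos n]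

lemma hh_le_one (n : ℕ) : hh n ≤ 1 := (hh_lt_one n).le

lemma hh_nonneg (n : ℕ) : 0 ≤ hh n := by
  unfold hh; linarith [pow_half_le_one n]

lemma hh_mono : StrictMono hh := by
  intro m n h
  have := pow_half_anti h
  unfold hh; simp only at this ⊢; linarith

lemma hh_mono_le {m n : ℕ} (h : m ≤ n) : hh m ≤ hh n := hh_mono.monotone h

lemma hh_lt_succ (n : ℕ) : hh n < hh (n+1) := hh_mono (Nat.lt_succ_self n)

/-! ### The index function -/

lemma idx_ex {t : ℝ} (ht : t < 1) : ∃ n, t < hh (n+1) := by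
  obtain ⟨n, hn⟩ := exists_pow_lt_of_lt_one (by linarith : (0:ℝ) < 1 - t)
    (by norm_num : (2⁻¹:ℝ) < 1)
  refine ⟨n, ?_⟩
  have h2 : (2⁻¹:ℝ) ^ (n+1) < (2⁻¹:ℝ) ^ n := pow_half_lt (Nat.lt_succ_self n)
  unfold hh; linarith

open Classical in
noncomputable def idx (t : ℝ) : ℕ := if ht : t < 1 then Nat.find (idx_ex ht) else 0

lemma idx_spec1 {t : ℝ} (ht : t < 1) : t < hh (idx t + 1) := by
  unfold idx; rw [dif_pos ht]; exact Nat.find_spec (idx_ex ht)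

lemma idx_spec2 {t : ℝ} (ht : t < 1) {m : ℕ} (hm : m < idx t) : hh (m+1) ≤ t := by
  unfold idx at hm
  rw [dif_pos ht] at hm
  exact le_of_not_gt (Nat.find_min (idx_ex ht) hm)

lemma idx_eq {t : ℝ} {n : ℕ} (h1 : hh n < t) (h2 : t < hh (n+1)) : idx t = n := by
  have ht : t < 1 := lt_of_lt_of_le h2 (hh_le_one _)
  by_contra hne
  rcases lt_or_gt_of_ne hne with h | h
  · have h3 := idx_spec1 ht
    have h4 : hh (idx t + 1) ≤ hh n := hh_mono_le h
    linarith
  · have := idx_spec2 ht h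
    linarith

lemma idx_lt {t : ℝ} {n : ℕ} (hn : 1 ≤ n) (ht : t < hh n) : idx t < n := by
  have ht1 : t < 1 := lt_of_lt_of_le ht (hh_le_one n)
  by_contra hle
  push_neg at hle
  have h1 : n - 1 < idx t := by omega
  have h2 := idx_spec2 ht1 h1
  rw [show n - 1 + 1 = n from by omega] at h2
  linarith

/-! ### The bump function -/

def KK : Set ℝ := Iic 0 ∪ Ici 1 ∪ range hh

lemma zero_mem_KK : (0:ℝ) ∈ KK := Or.inl (Or.inl (by simp))

lemma mem_KK_le {t : ℝ} (h : t ≤ 0) : t ∈ KK := Or.inl (Or.inl h)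

lemma mem_KK_ge {t : ℝ} (h : 1 ≤ t) : t ∈ KK := Or.inl (Or.inr h)

lemma mem_KK_hh (n : ℕ) : hh n ∈ KK := Or.inr ⟨n, rfl⟩

def gg (t : ℝ) : ℝ := Metric.infDist t KK

lemma gg_cont : Continuous gg := Metric.continuous_infDist_pt KK

lemma gg_nonneg (t : ℝ) : 0 ≤ gg t := Metric.infDist_nonneg

lemma gg_eq_zero {t : ℝ} (h : t ∈ KK) : gg t = 0 := Metric.infDist_zero_of_mem h

lemma gg_pos {n : ℕ} {t : ℝ} (h1 : hh n < t) (h2 : t < hh (n+1)) : 0 < gg t := by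
  have hne : KK.Nonempty := ⟨0, zero_mem_KK⟩
  have hb : 0 < min (t - hh n) (hh (n+1) - t) := lt_min (by linarith) (by linarith)
  have hle : min (t - hh n) (hh (n+1) - t) ≤ gg t := by
    by_contra hcon
    push_neg at hcon
    obtain ⟨y, hy, hdy⟩ := (Metric.infDist_lt_iff hne).mp hcon
    rw [Real.dist_eq] at hdy
    have hkey : min (t - hh n) (hh (n+1) - t) ≤ |t - y| := by
      rcases hy with (hy | hy) | ⟨m, rfl⟩
      · have hy' : y ≤ hh n := le_trans hy (hh_nonneg n)
        calc min (t - hh n) (hh (n+1) - t) ≤ t - hh n := min_le_left _ _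
          _ ≤ t - y := by linarith
          _ ≤ |t - y| := le_abs_self _
      · have hy' : hh (n+1) ≤ y := le_trans (hh_le_one (n+1)) hy
        calc min (t - hh n) (hh (n+1) - t) ≤ hh (n+1) - t := min_le_right _ _
          _ ≤ y - t := by linarith
          _ ≤ |t - y| := by rw [abs_sub_comm]; exact le_abs_self _
      · rcases le_or_gt m n with hm | hm
        · have hy' : hh m ≤ hh n := hh_mono_le hm
          calc min (t - hh n) (hh (n+1) - t) ≤ t - hh n := min_le_left _ _
            _ ≤ t - hh m := by linarith
            _ ≤ |t - hh m| := le_abs_self _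
        · have hy' : hh (n+1) ≤ hh m := hh_mono_le hm
          calc min (t - hh n) (hh (n+1) - t) ≤ hh (n+1) - t := min_le_right _ _
            _ ≤ hh m - t := by linarith
            _ ≤ |t - hh m| := by rw [abs_sub_comm]; exact le_abs_self _
    linarith
  linarith

/-! ### Values -/

def aa (i : Fin 3) : ℝ := (i : ℕ) + 1

lemma aa_inj : Function.Injective aa := by
  intro i j h
  unfold aa at h
  have h1 : ((i:ℕ):ℝ) = ((j:ℕ):ℝ) := by linarith
  have h2 : (i : ℕ) = (j : ℕ) := by exact_mod_cast h1
  exact Fin.val_injective h2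

lemma aa_abs_le (i : Fin 3) : |aa i| ≤ 3 := by
  unfold aa
  rw [abs_of_nonneg (by positivity)]
  have h2 : ((i:ℕ):ℝ) ≤ 2 := by exact_mod_cast Nat.lt_succ_iff.mp i.isLt
  linarith

/-! ### The family of elements of `S` -/

def xf (ξ : ℕ → Fin 3) (t : ℝ) : ℝ := aa (ξ (idx t)) * gg t

lemma xf_eq_zero {ξ : ℕ → Fin 3} {t : ℝ} (h : t ∈ KK) : xf ξ t = 0 := by
  unfold xf; rw [gg_eq_zero h, mul_zero]

lemma xf_cont (ξ : ℕ → Fin 3) : Continuous (xf ξ) := by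
  rw [continuous_iff_continuousAt]
  intro t0
  by_cases hg : gg t0 = 0
  · have h0 : xf ξ t0 = 0 := by unfold xf; rw [hg, mul_zero]
    unfold ContinuousAt
    rw [h0]
    apply squeeze_zero_norm (a := fun t => 3 * gg t)
    · intro t
      rw [Real.norm_eq_abs]
      unfold xf
      rw [abs_mul, abs_of_nonneg (gg_nonneg t)]
      exact mul_le_mul_of_nonneg_right (aa_abs_le _) (gg_nonneg t)
    · have h1 : Tendsto (fun t => 3 * gg t) (𝓝 t0) (𝓝 (3 * gg t0)) :=
        (continuous_const.mul gg_cont).tendsto t0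
      rw [hg, mul_zero] at h1
      exact h1
  · have hpos : 0 < gg t0 := lt_of_le_of_ne (gg_nonneg t0) (Ne.symm hg)
    have hK : t0 ∉ KK := fun h => hg (gg_eq_zero h)
    have h0 : 0 < t0 := by
      by_contra h; push_neg at h; exact hK (mem_KK_le h)
    have h1 : t0 < 1 := by
      by_contra h; push_neg at h; exact hK (mem_KK_ge h)
    have hub : t0 < hh (idx t0 + 1) := idx_spec1 h1
    have hlb : hh (idx t0) < t0 := by
      rcases Nat.eq_zero_or_pos (idx t0) with h | h
      · rw [h, hh_zero]; exact h0
      · have h2 : idx t0 - 1 < idx t0 := by omega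
        have h3 := idx_spec2 h1 h2
        rw [show idx t0 - 1 + 1 = idx t0 from by omega] at h3
        exact lt_of_le_of_ne h3 (fun he => hK (he ▸ mem_KK_hh (idx t0)))
    have hev : (fun t => aa (ξ (idx t0)) * gg t) =ᶠ[𝓝 t0] xf ξ := by
      filter_upwards [isOpen_Ioo.mem_nhds
        (⟨hlb, hub⟩ : t0 ∈ Ioo (hh (idx t0)) (hh (idx t0 + 1)))] with t ht
      unfold xf
      rw [idx_eq ht.1 ht.2]
    exact ContinuousAt.congr ((continuous_const.mul gg_cont).continuousAt) hev

def Xi (ξ : ℕ → Fin 3) : Sp where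
  ρ := 1
  toFun := xf ξ
  ρ_nonneg := zero_le_one
  contOn := (xf_cont ξ).continuousOn
  zero_at_zero := xf_eq_zero zero_mem_KK
  eq_clamp := by
    intro t
    rcases le_or_gt t 0 with h | h
    · rw [min_eq_left (h.trans zero_le_one), max_eq_left h,
        xf_eq_zero (mem_KK_le h), xf_eq_zero zero_mem_KK]
    · rcases le_or_gt t 1 with h2 | h2
      · rw [min_eq_left h2, max_eq_right h.le]
      · rw [min_eq_right h2.le, xf_eq_zero (mem_KK_ge h2.le),
          max_eq_right zero_le_one, xf_eq_zero (mem_KK_ge le_rfl)]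

lemma Xi_rho (ξ : ℕ → Fin 3) : (Xi ξ).ρ = 1 := rfl

lemma seg_Xi {ξ ξ' : ℕ → Fin 3} {n : ℕ} (hk : ∀ k < n, ξ k = ξ' k) (hn : ξ n ≠ ξ' n) :
    seg (Xi ξ) (Xi ξ') = hh n := by
  set A := {t : ℝ | t ≤ min (Xi ξ).ρ (Xi ξ').ρ ∧
    ∀ t' ∈ Set.Ico (0:ℝ) t, (Xi ξ).toFun t' = (Xi ξ').toFun t'} with hA
  have hmem : hh n ∈ A := by
    constructor
    · show hh n ≤ min (Xi ξ).ρ (Xi ξ').ρ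
      rw [Xi_rho, Xi_rho, min_self]
      exact hh_le_one n
    · intro t' ht'
      rcases Nat.eq_zero_or_pos n with h | h
      · exfalso
        rw [h, hh_zero] at ht'
        exact absurd ht'.2 (not_lt.mpr ht'.1)
      · have hi : idx t' < n := idx_lt h ht'.2
        show xf ξ t' = xf ξ' t'
        unfold xf
        rw [hk _ hi]
  have hub : ∀ t ∈ A, t ≤ hh n := by
    intro t ht
    by_contra hgt
    push_neg at hgt
    set τ := (hh n + min t (hh (n+1))) / 2 with hτ
    have hmin : hh n < min t (hh (n+1)) := lt_min hgt (hh_lt_succ n)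
    have hminl := min_le_left t (hh (n+1))
    have hminr := min_le_right t (hh (n+1))
    have hτ1 : hh n < τ := by rw [hτ]; linarith
    have hτt : τ < t := by rw [hτ]; linarith
    have hτn : τ < hh (n+1) := by rw [hτ]; linarith
    have h0τ : (0:ℝ) ≤ τ := le_trans (hh_nonneg n) hτ1.le
    have heq : xf ξ τ = xf ξ' τ := ht.2 τ ⟨h0τ, hτt⟩
    unfold xf at heq
    rw [idx_eq hτ1 hτn] at heq
    have hgτ : gg τ ≠ 0 := ne_of_gt (gg_pos hτ1 hτn)
    exact hn (aa_inj (mul_right_cancel₀ hgτ heq))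
  show sSup A = hh n
  apply le_antisymm
  · exact csSup_le ⟨hh n, hmem⟩ hub
  · refine le_csSup ⟨1, fun t ht => ?_⟩ hmem
    have := ht.1
    rw [Xi_rho, Xi_rho, min_self] at this
    exact this

lemma dS_Xi {ξ ξ' : ℕ → Fin 3} {n : ℕ} (hk : ∀ k < n, ξ k = ξ' k) (hn : ξ n ≠ ξ' n) :
    dS (Xi ξ) (Xi ξ') = 2 * (2⁻¹:ℝ)^n := by
  unfold dS
  rw [seg_Xi hk hn, Xi_rho, Xi_rho]
  unfold hh
  ring

/-! ### Basic properties of `segD` -/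

lemma segD_mem0 (x y : Dp) : (0:ℝ) ∈ {t : ℝ | t ≤ min x.ρ y.ρ ∧
    ∀ t' ∈ Set.Ico (0:ℝ) t, x.toFun t' = y.toFun t'} :=
  ⟨le_min x.ρ_nonneg y.ρ_nonneg, fun t' ht' => absurd ht'.2 (not_lt.mpr ht'.1)⟩

lemma segD_bdd (x y : Dp) : BddAbove {t : ℝ | t ≤ min x.ρ y.ρ ∧
    ∀ t' ∈ Set.Ico (0:ℝ) t, x.toFun t' = y.toFun t'} :=
  ⟨min x.ρ y.ρ, fun _ ht => ht.1⟩

lemma segD_nonneg (x y : Dp) : 0 ≤ segD x y := by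
  show (0:ℝ) ≤ sSup _
  exact le_csSup (segD_bdd x y) (segD_mem0 x y)

lemma segD_le (x y : Dp) : segD x y ≤ min x.ρ y.ρ := by
  show sSup _ ≤ _
  exact csSup_le ⟨0, segD_mem0 x y⟩ fun _ ht => ht.1

lemma segD_agree {x y : Dp} {t : ℝ} (h0 : 0 ≤ t) (ht : t < segD x y) :
    x.toFun t = y.toFun t := by
  have ht' : t < sSup {t : ℝ | t ≤ min x.ρ y.ρ ∧
      ∀ t' ∈ Set.Ico (0:ℝ) t, x.toFun t' = y.toFun t'} := ht
  obtain ⟨u, hu, htu⟩ := exists_lt_of_lt_csSup ⟨0, segD_mem0 x y⟩ ht'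
  exact hu.2 t ⟨h0, htu⟩

lemma segD_ultra (x y z : Dp) : min (segD x y) (segD y z) ≤ segD x z := by
  show _ ≤ sSup _
  refine le_csSup (segD_bdd x z) ⟨?_, ?_⟩
  · refine le_min ?_ ?_
    · exact le_trans (min_le_left _ _) (le_trans (segD_le x y) (min_le_left _ _))
    · exact le_trans (min_le_right _ _) (le_trans (segD_le y z) (min_le_right _ _))
  · intro t' ht'
    have h1 : t' < segD x y := lt_of_lt_of_le ht'.2 (min_le_left _ _)
    have h2 : t' < segD y z := lt_of_lt_of_le ht'.2 (min_le_right _ _)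
    exact (segD_agree ht'.1 h1).trans (segD_agree ht'.1 h2)

lemma dD_eq (x y : Dp) : dD x y = x.ρ + y.ρ - 2 * segD x y := by
  unfold dD; ring

lemma segD_strict_ne {x y : Dp} (h : segD x y < min x.ρ y.ρ) :
    x.toFun (segD x y) ≠ y.toFun (segD x y) := by
  intro heq
  set s := segD x y with hs
  have hfin : {t : ℝ | x.toFun t ≠ y.toFun t}.Finite := by
    apply Set.Finite.subset (x.finite_supp.union y.finite_supp)
    intro t ht
    simp only [Set.mem_union, Set.mem_setOf_eq]
    by_contra hcon
    push_neg at hcon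
    exact ht (hcon.1.trans hcon.2.symm)
  set B := {t : ℝ | x.toFun t ≠ y.toFun t} ∩ Ioi s with hB
  have hBfin : B.Finite := hfin.inter_of_left _
  set C := insert (min x.ρ y.ρ) B with hCdef
  have hCfin : C.Finite := hBfin.insert _
  have hCne : C.Nonempty := ⟨_, mem_insert _ _⟩
  have hCgt : ∀ u ∈ C, s < u := by
    rintro u (rfl | hu)
    · exact h
    · exact hu.2
  have hmC : sInf C ∈ C := hCne.csInf_mem hCfin
  have hms : s < sInf C := hCgt _ hmC
  have hmem : sInf C ∈ {t : ℝ | t ≤ min x.ρ y.ρ ∧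
      ∀ t' ∈ Set.Ico (0:ℝ) t, x.toFun t' = y.toFun t'} := by
    constructor
    · exact csInf_le hCfin.bddBelow (mem_insert _ _)
    · intro t' ht'
      rcases lt_trichotomy t' s with h1 | h1 | h1
      · exact segD_agree ht'.1 h1
      · rw [h1]; exact heq
      · by_contra hne
        have htB : t' ∈ B := ⟨hne, h1⟩
        have : sInf C ≤ t' := csInf_le hCfin.bddBelow (mem_insert_of_mem _ htB)
        linarith [ht'.2]
  have hle : sInf C ≤ segD x y := le_csSup (segD_bdd x y) hmem
  rw [← hs] at hle
  linarith

/-! ### Consequences of an isometric embedding -/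

def PP (Φ : Sp → Dp) (ξ : ℕ → Fin 3) : Dp := Φ (Xi ξ)

def rr (Φ : Sp → Dp) (ξ : ℕ → Fin 3) : ℝ := (PP Φ ξ).ρ

lemma segD_PP (Φ : Sp → Dp) (hiso : ∀ f g : Sp, dD (Φ f) (Φ g) = dS f g)
    {ξ ξ' : ℕ → Fin 3} {n : ℕ} (hk : ∀ k < n, ξ k = ξ' k) (hn : ξ n ≠ ξ' n) :
    segD (PP Φ ξ) (PP Φ ξ') = (rr Φ ξ + rr Φ ξ') / 2 - (2⁻¹:ℝ)^n := by
  have h1 : dD (PP Φ ξ) (PP Φ ξ') = 2 * (2⁻¹:ℝ)^n := by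
    unfold PP
    rw [hiso]
    exact dS_Xi hk hn
  have h2 := dD_eq (PP Φ ξ) (PP Φ ξ')
  unfold rr
  linarith

lemma TT (Φ : Sp → Dp) (hiso : ∀ f g : Sp, dD (Φ f) (Φ g) = dS f g)
    {x y z : ℕ → Fin 3} (hxy : x 0 ≠ y 0) (hyz : y 0 ≠ z 0) (hxz : x 0 ≠ z 0) :
    rr Φ y ≤ max (rr Φ x) (rr Φ z) := by
  have e1 := segD_PP Φ hiso (n := 0) (fun k hk => absurd hk (Nat.not_lt_zero k)) hxy
  have e2 := segD_PP Φ hiso (n := 0) (fun k hk => absurd hk (Nat.not_lt_zero k)) hyz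
  have e3 := segD_PP Φ hiso (n := 0) (fun k hk => absurd hk (Nat.not_lt_zero k)) hxz
  have hu := segD_ultra (PP Φ x) (PP Φ y) (PP Φ z)
  rw [e1, e2, e3] at hu
  rcases min_le_iff.mp hu with h | h
  · exact le_trans (by linarith) (le_max_right _ _)
  · exact le_trans (by linarith) (le_max_left _ _)

lemma exI (Φ : Sp → Dp) (hiso : ∀ f g : Sp, dD (Φ f) (Φ g) = dS f g) :
    ∃ i0 : Fin 3, ∀ ξ ξ' : ℕ → Fin 3, ξ 0 = i0 → ξ' 0 = i0 → rr Φ ξ = rr Φ ξ' := by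
  by_cases hA : ∀ ξ ξ' : ℕ → Fin 3, ξ 0 = 0 → ξ' 0 = 0 → rr Φ ξ = rr Φ ξ'
  · exact ⟨0, hA⟩
  · push_neg at hA
    obtain ⟨ξa, ξb, ha0, hb0, hab⟩ := hA
    have key : ∀ η : ℕ → Fin 3, η 0 = 1 → rr Φ η = rr Φ (fun _ => (2:Fin 3)) := by
      intro η hη
      have d1 : ξa 0 ≠ η 0 := by rw [ha0, hη]; decide
      have d2 : η 0 ≠ (fun _ => (2:Fin 3)) 0 := by
        rw [hη]; exact (by decide : (1:Fin 3) ≠ 2)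
      have d3 : ξa 0 ≠ (fun _ => (2:Fin 3)) 0 := by
        rw [ha0]; exact (by decide : (0:Fin 3) ≠ 2)
      have d1' : ξb 0 ≠ η 0 := by rw [hb0, hη]; decide
      have d3' : ξb 0 ≠ (fun _ => (2:Fin 3)) 0 := by
        rw [hb0]; exact (by decide : (0:Fin 3) ≠ 2)
      have t1 : rr Φ η ≤ max (rr Φ ξa) (rr Φ (fun _ => (2:Fin 3))) :=
        TT Φ hiso d1 d2 d3
      have t2 : rr Φ ξa ≤ max (rr Φ η) (rr Φ (fun _ => (2:Fin 3))) :=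
        TT Φ hiso d1.symm d3 d2
      have t3 : rr Φ (fun _ => (2:Fin 3)) ≤ max (rr Φ ξa) (rr Φ η) :=
        TT Φ hiso d3 d2.symm d1
      have t1' : rr Φ η ≤ max (rr Φ ξb) (rr Φ (fun _ => (2:Fin 3))) :=
        TT Φ hiso d1' d2 d3'
      have t2' : rr Φ ξb ≤ max (rr Φ η) (rr Φ (fun _ => (2:Fin 3))) :=
        TT Φ hiso d1'.symm d3' d2
      have t3' : rr Φ (fun _ => (2:Fin 3)) ≤ max (rr Φ ξb) (rr Φ η) :=
        TT Φ hiso d3' d2.symm d1'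
      set A := rr Φ ξa
      set A' := rr Φ ξb
      set B := rr Φ η
      set C := rr Φ (fun _ => (2:Fin 3))
      rcases lt_trichotomy B C with h | h | h
      · exfalso
        have hCA : C ≤ A := by
          rcases le_max_iff.mp t3 with h' | h'
          · exact h'
          · linarith
        have hAC : A ≤ C := by
          rcases le_max_iff.mp t2 with h' | h'
          · linarith
          · exact h'
        have hCA' : C ≤ A' := by
          rcases le_max_iff.mp t3' with h' | h'
          · exact h'
          · linarith
        have hAC' : A' ≤ C := by
          rcases le_max_iff.mp t2' with h' | h'
          · linarith
          · exact h'
        exact hab (by linarith)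
      · exact h
      · exfalso
        have hBA : B ≤ A := by
          rcases le_max_iff.mp t1 with h' | h'
          · exact h'
          · linarith
        have hAB : A ≤ B := by
          rcases le_max_iff.mp t2 with h' | h'
          · exact h'
          · linarith
        have hBA' : B ≤ A' := by
          rcases le_max_iff.mp t1' with h' | h'
          · exact h'
          · linarith
        have hAB' : A' ≤ B := by
          rcases le_max_iff.mp t2' with h' | h'
          · exact h'
          · linarith
        exact hab (by linarith)
    exact ⟨1, fun η η' hη hη' => by rw [key η hη, key η' hη']⟩

/-! ### Construction of the diagonal sequence -/

def extS (σ : ℕ → Fin 3) (n : ℕ) (d : Fin 3) : ℕ → Fin 3 := fun k => if k < n then σ k else d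

def aHt (Φ : Sp → Dp) (i0 : Fin 3) : ℝ := rr Φ (fun _ => i0)

def vvD (Φ : Sp → Dp) (i0 : Fin 3) (σ : ℕ → Fin 3) (n : ℕ) (d : Fin 3) : ℝ :=
  (PP Φ (extS σ n d)).toFun (aHt Φ i0 - (2⁻¹:ℝ)^n)

open Classical in
noncomputable def pickD (Φ : Sp → Dp) (i0 : Fin 3) (σ : ℕ → Fin 3) (n : ℕ) : Fin 3 :=
  if vvD Φ i0 σ n 0 = 0 then 1 else 0

section WithConst

variable {Φ : Sp → Dp} {i0 : Fin 3}

lemma rr_const (Φ : Sp → Dp) (i0 : Fin 3)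
    (hconst : ∀ ξ ξ' : ℕ → Fin 3, ξ 0 = i0 → ξ' 0 = i0 → rr Φ ξ = rr Φ ξ') {ξ : ℕ → Fin 3} (h : ξ 0 = i0) : rr Φ ξ = aHt Φ i0 :=
  hconst ξ (fun _ => i0) h rfl

lemma seg2 (Φ : Sp → Dp) (hiso : ∀ f g : Sp, dD (Φ f) (Φ g) = dS f g) (i0 : Fin 3)
    (hconst : ∀ ξ ξ' : ℕ → Fin 3, ξ 0 = i0 → ξ' 0 = i0 → rr Φ ξ = rr Φ ξ') {σ τ : ℕ → Fin 3} {n : ℕ} (hσ : σ 0 = i0) (hτ : τ 0 = i0)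
    (hk : ∀ k < n, σ k = τ k) (hn : σ n ≠ τ n) :
    segD (PP Φ σ) (PP Φ τ) = aHt Φ i0 - (2⁻¹:ℝ)^n := by
  rw [segD_PP Φ hiso hk hn, rr_const Φ i0 hconst hσ, rr_const Φ i0 hconst hτ]
  ring

lemma aH_lb (Φ : Sp → Dp) (hiso : ∀ f g : Sp, dD (Φ f) (Φ g) = dS f g) (i0 : Fin 3)
    (hconst : ∀ ξ ξ' : ℕ → Fin 3, ξ 0 = i0 → ξ' 0 = i0 → rr Φ ξ = rr Φ ξ') {n : ℕ} (hn : 1 ≤ n) : 0 ≤ aHt Φ i0 - (2⁻¹:ℝ)^n := by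
  have hσ0 : (fun k => if k = n then (0:Fin 3) else i0) 0 = i0 := by
    show (if 0 = n then (0:Fin 3) else i0) = i0
    rw [if_neg (by omega : ¬ (0:ℕ) = n)]
  have hτ0 : (fun k => if k = n then (1:Fin 3) else i0) 0 = i0 := by
    show (if 0 = n then (1:Fin 3) else i0) = i0
    rw [if_neg (by omega : ¬ (0:ℕ) = n)]
  have hk : ∀ k < n, (fun k => if k = n then (0:Fin 3) else i0) k =
      (fun k => if k = n then (1:Fin 3) else i0) k := by
    intro k hklt
    show (if k = n then (0:Fin 3) else i0) = (if k = n then (1:Fin 3) else i0)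
    rw [if_neg (by omega : ¬ k = n), if_neg (by omega : ¬ k = n)]
  have hne : (fun k => if k = n then (0:Fin 3) else i0) n ≠
      (fun k => if k = n then (1:Fin 3) else i0) n := by
    show (if n = n then (0:Fin 3) else i0) ≠ (if n = n then (1:Fin 3) else i0)
    rw [if_pos rfl, if_pos rfl]
    decide
  have h := seg2 Φ hiso i0 hconst hσ0 hτ0 hk hne
  have h0 := segD_nonneg (PP Φ (fun k => if k = n then (0:Fin 3) else i0))
    (PP Φ (fun k => if k = n then (1:Fin 3) else i0))
  linarith

lemma KL1 (Φ : Sp → Dp) (hiso : ∀ f g : Sp, dD (Φ f) (Φ g) = dS f g) (i0 : Fin 3)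
    (hconst : ∀ ξ ξ' : ℕ → Fin 3, ξ 0 = i0 → ξ' 0 = i0 → rr Φ ξ = rr Φ ξ') {σ : ℕ → Fin 3} {n : ℕ} (hn : 1 ≤ n) (hσ0 : σ 0 = i0) {d e : Fin 3}
    (hde : d ≠ e) : vvD Φ i0 σ n d ≠ vvD Φ i0 σ n e := by
  have hd0 : extS σ n d 0 = i0 := by
    show (if 0 < n then σ 0 else d) = i0
    rw [if_pos (by omega)]
    exact hσ0
  have he0 : extS σ n e 0 = i0 := by
    show (if 0 < n then σ 0 else e) = i0
    rw [if_pos (by omega)]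
    exact hσ0
  have hk : ∀ k < n, extS σ n d k = extS σ n e k := by
    intro k hklt
    show (if k < n then σ k else d) = (if k < n then σ k else e)
    rw [if_pos hklt, if_pos hklt]
  have hne : extS σ n d n ≠ extS σ n e n := by
    show (if n < n then σ n else d) ≠ (if n < n then σ n else e)
    rw [if_neg (lt_irrefl n), if_neg (lt_irrefl n)]
    exact hde
  have hs := seg2 Φ hiso i0 hconst hd0 he0 hk hne
  have hstrict : segD (PP Φ (extS σ n d)) (PP Φ (extS σ n e)) <
      min (PP Φ (extS σ n d)).ρ (PP Φ (extS σ n e)).ρ := by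
    rw [hs, show (PP Φ (extS σ n d)).ρ = aHt Φ i0 from rr_const Φ i0 hconst hd0,
      show (PP Φ (extS σ n e)).ρ = aHt Φ i0 from rr_const Φ i0 hconst he0, min_self]
    linarith [pow_half_pos n]
  have hne2 := segD_strict_ne hstrict
  rw [hs] at hne2
  exact hne2

lemma KL2 (Φ : Sp → Dp) (hiso : ∀ f g : Sp, dD (Φ f) (Φ g) = dS f g) (i0 : Fin 3)
    (hconst : ∀ ξ ξ' : ℕ → Fin 3, ξ 0 = i0 → ξ' 0 = i0 → rr Φ ξ = rr Φ ξ') {σ τ : ℕ → Fin 3} {n : ℕ} (hn : 1 ≤ n) (hσ0 : σ 0 = i0) (hτ0 : τ 0 = i0)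
    (hag : ∀ k ≤ n, σ k = τ k) :
    (PP Φ σ).toFun (aHt Φ i0 - (2⁻¹:ℝ)^n) = (PP Φ τ).toFun (aHt Φ i0 - (2⁻¹:ℝ)^n) := by
  by_cases heq : σ = τ
  · rw [heq]
  · have hex : ∃ k, σ k ≠ τ k := by
      by_contra hcon
      push_neg at hcon
      exact heq (funext hcon)
    have hM := Nat.find_spec hex
    have hmin : ∀ k < Nat.find hex, σ k = τ k := fun k hk =>
      not_ne_iff.mp (Nat.find_min hex hk)
    have hMn : n < Nat.find hex := by
      by_contra hcon
      push_neg at hcon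
      exact hM (hag _ hcon)
    have hs := seg2 Φ hiso i0 hconst hσ0 hτ0 hmin hM
    apply segD_agree (aH_lb Φ hiso i0 hconst hn)
    rw [hs]
    have := pow_half_lt hMn
    linarith

lemma pick_ne (Φ : Sp → Dp) (hiso : ∀ f g : Sp, dD (Φ f) (Φ g) = dS f g) (i0 : Fin 3)
    (hconst : ∀ ξ ξ' : ℕ → Fin 3, ξ 0 = i0 → ξ' 0 = i0 → rr Φ ξ = rr Φ ξ') {σ : ℕ → Fin 3} {n : ℕ} (hn : 1 ≤ n) (hσ0 : σ 0 = i0) :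
    vvD Φ i0 σ n (pickD Φ i0 σ n) ≠ 0 := by
  by_cases h : vvD Φ i0 σ n 0 = 0
  · have hp : pickD Φ i0 σ n = 1 := by
      unfold pickD
      rw [if_pos h]
    rw [hp]
    have h2 := KL1 Φ hiso i0 hconst hn hσ0 (show (1:Fin 3) ≠ 0 by decide)
    rw [h] at h2
    exact h2
  · have hp : pickD Φ i0 σ n = 0 := by
      unfold pickD
      rw [if_neg h]
    rw [hp]
    exact h

end WithConst

noncomputable def PrefD (Φ : Sp → Dp) (i0 : Fin 3) : ℕ → ℕ → Fin 3
  | 0 => fun _ => i0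
  | (m+1) => fun k => if k = m+1 then pickD Φ i0 (PrefD Φ i0 m) (m+1) else PrefD Φ i0 m k

def sigf (Φ : Sp → Dp) (i0 : Fin 3) (k : ℕ) : Fin 3 := PrefD Φ i0 k k

lemma PrefD_succ (Φ : Sp → Dp) (i0 : Fin 3) (m k : ℕ) :
    PrefD Φ i0 (m+1) k = if k = m+1 then pickD Φ i0 (PrefD Φ i0 m) (m+1)
      else PrefD Φ i0 m k := rfl

lemma PrefD_zero' (Φ : Sp → Dp) (i0 : Fin 3) (m : ℕ) : PrefD Φ i0 m 0 = i0 := by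
  induction m with
  | zero => rfl
  | succ m ih =>
    rw [PrefD_succ, if_neg (by omega)]
    exact ih

lemma PrefD_agree (Φ : Sp → Dp) (i0 : Fin 3) :
    ∀ m k, k ≤ m → PrefD Φ i0 m k = sigf Φ i0 k := by
  intro m
  induction m with
  | zero =>
    intro k hk
    have : k = 0 := Nat.le_zero.mp hk
    subst this
    rfl
  | succ m ih =>
    intro k hk
    by_cases h : k = m+1
    · subst h
      rfl
    · have hk' : k ≤ m := by omega
      rw [PrefD_succ, if_neg h]
      exact ih k hk'

lemma sig_ne (Φ : Sp → Dp) (hiso : ∀ f g : Sp, dD (Φ f) (Φ g) = dS f g) (i0 : Fin 3)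
    (hconst : ∀ ξ ξ' : ℕ → Fin 3, ξ 0 = i0 → ξ' 0 = i0 → rr Φ ξ = rr Φ ξ') (m : ℕ) :
    (PP Φ (sigf Φ i0)).toFun (aHt Φ i0 - (2⁻¹:ℝ)^(m+1)) ≠ 0 := by
  have hτ0 : extS (PrefD Φ i0 m) (m+1) (pickD Φ i0 (PrefD Φ i0 m) (m+1)) 0 = i0 := by
    show (if 0 < m+1 then PrefD Φ i0 m 0 else _) = i0
    rw [if_pos (by omega)]
    exact PrefD_zero' Φ i0 m
  have hs0 : sigf Φ i0 0 = i0 := PrefD_zero' Φ i0 0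
  have hag : ∀ k ≤ m+1, sigf Φ i0 k =
      extS (PrefD Φ i0 m) (m+1) (pickD Φ i0 (PrefD Φ i0 m) (m+1)) k := by
    intro k hk
    rcases eq_or_lt_of_le hk with h | h
    · subst h
      show sigf Φ i0 (m+1) = if m+1 < m+1 then _ else pickD Φ i0 (PrefD Φ i0 m) (m+1)
      rw [if_neg (lt_irrefl (m+1))]
      show PrefD Φ i0 (m+1) (m+1) = _
      rw [PrefD_succ, if_pos rfl]
    · have hk' : k ≤ m := by omega
      show sigf Φ i0 k = if k < m+1 then PrefD Φ i0 m k else _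
      rw [if_pos h, PrefD_agree Φ i0 m k hk']
  have hKL2 := KL2 Φ hiso i0 hconst (n := m+1) (by omega) hs0 hτ0 hag
  rw [hKL2]
  exact pick_ne Φ hiso i0 hconst (by omega) (PrefD_zero' Φ i0 m)

end NoEmb

/-- there is no isometric embedding of `S` into `D`; in
particular, `S` and `D` are not isometric. -/
theorem no_embedding_S_into_D :
    (¬ ∃ Φ : Sp → Dp, ∀ f g : Sp, dD (Φ f) (Φ g) = dS f g) ∧
    (¬ ∃ Φ : Sp → Dp, Function.Bijective Φ ∧
      ∀ f g : Sp, dD (Φ f) (Φ g) = dS f g) := by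
  have main : ¬ ∃ Φ : Sp → Dp, ∀ f g : Sp, dD (Φ f) (Φ g) = dS f g := by
    rintro ⟨Φ, hiso⟩
    obtain ⟨i0, hconst⟩ := NoEmb.exI Φ hiso
    have hfin := (NoEmb.PP Φ (NoEmb.sigf Φ i0)).finite_supp
    have hsub : Set.range (fun m : ℕ => NoEmb.aHt Φ i0 - (2⁻¹:ℝ)^(m+1)) ⊆
        {t : ℝ | (NoEmb.PP Φ (NoEmb.sigf Φ i0)).toFun t ≠ 0} := by
      rintro t ⟨m, rfl⟩
      exact NoEmb.sig_ne Φ hiso i0 hconst m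
    have hinj : Function.Injective (fun m : ℕ => NoEmb.aHt Φ i0 - (2⁻¹:ℝ)^(m+1)) := by
      intro p q hpq
      simp only at hpq
      have h1 : (2⁻¹:ℝ)^(p+1) = (2⁻¹:ℝ)^(q+1) := by linarith
      have h2 : p + 1 = q + 1 := NoEmb.pow_half_anti.injective h1
      omega
    exact Set.infinite_range_of_injective hinj (hfin.subset hsub)
  refine ⟨main, fun h => ?_⟩
  obtain ⟨Φ, _, hiso⟩ := h
  exact main ⟨Φ, hiso⟩
end
end
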